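/- Let 0 < ξ < 1 and let (z, z′) be in the principal or complementary series. The functions ψ_a = ψ_a(·; z, z′, ξ) satisfy the three-term relation in the index a: for all a, x ∈ ℤ′, (1−ξ)·x·ψ_a(x) = √(ξ(z−a+1/2)(z′−a+1/2))·ψ_{a−1}(x) + √(ξ(z−a−1/2)(z′−a−1/2))·ψ_{a+1}(x) + (−a + ξ(z+z′−a))·ψ_a(x), where the quantities under the square roots are positive reals and the positive square roots are taken. -/

import Mathlib

/-- Principal series: `z` is non-real and `z' = conj z`. -/
def PrincipalSeries (z z' : ℂ) : Prop := z.im ≠ 0 ∧ z' = (starRingEnd ℂ) z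

/-- Complementary series: `z, z'` are real and lie in the same interval `(m, m+1)`. -/
def ComplementarySeries (z z' : ℂ) : Prop :=
  z.im = 0 ∧ z'.im = 0 ∧
    ∃ m : ℤ, (m : ℝ) < z.re ∧ z.re < m + 1 ∧ (m : ℝ) < z'.re ∧ z'.re < m + 1
/-- The positive square root of a positive real number given as a complex number:
`posSqrtRe w = √(Re w)`, viewed in `ℂ`. -/
noncomputable def posSqrtRe (w : ℂ) : ℂ := ((Real.sqrt w.re : ℝ) : ℂ)

/-- The function `ψ_a(x; z, z', ξ)`, defined by the contour integral representation over the
unit circle (an admissible radius since `√ξ < 1 < 1/√ξ`); all complex powers are principal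
branches, and the first factor is the positive square root of the positive real number
`Γ(x+z+1/2)Γ(x+z'+1/2) / (Γ(z-a+1/2)Γ(z'-a+1/2))`. -/
noncomputable def psiF (z z' : ℂ) (ξ : ℝ) (a x : ℝ) : ℂ :=
  posSqrtRe (Complex.Gamma ((x : ℂ) + z + 1/2) * Complex.Gamma ((x : ℂ) + z' + 1/2) /
      (Complex.Gamma (z - (a : ℂ) + 1/2) * Complex.Gamma (z' - (a : ℂ) + 1/2))) *
    (Complex.Gamma (z' - (a : ℂ) + 1/2) / Complex.Gamma (z' + (x : ℂ) + 1/2)) *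
    (1 - (ξ : ℂ)) ^ ((z' - z + 1) / 2) *
    ((2 * (Real.pi : ℂ) * Complex.I)⁻¹ *
      ∮ ω in C(0, 1), (1 - (Real.sqrt ξ : ℂ) * ω) ^ (-z' + (a : ℂ) - 1/2) *
        (1 - (Real.sqrt ξ : ℂ) / ω) ^ (z - (a : ℂ) - 1/2) * ω ^ (-(x : ℂ) - (a : ℂ) - 1))


section Helpers
open Complex Metric

lemma sphere_ne_zero {ω : ℂ} (hω : ω ∈ sphere (0:ℂ) 1) : ω ≠ 0 := by
  simp only [mem_sphere_iff_norm, sub_zero] at hω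
  intro h; rw [h] at hω; simp at hω

lemma re_pos_one_sub_mul {s : ℝ} (hs1 : s < 1) (hs0 : 0 ≤ s) {ω : ℂ}
    (hω : ω ∈ sphere (0:ℂ) 1) : 0 < (1 - (s:ℂ) * ω).re := by
  simp only [mem_sphere_iff_norm, sub_zero] at hω
  have h1 : |((s:ℂ) * ω).re| ≤ ‖(s:ℂ) * ω‖ := Complex.abs_re_le_norm _
  rw [norm_mul, hω, mul_one, Complex.norm_real] at h1
  have := abs_le.1 h1
  simp only [sub_re, one_re, mul_re, ofReal_re, ofReal_im]
  rw [Real.norm_eq_abs, _root_.abs_of_nonneg hs0] at this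
  simp only [mul_re, ofReal_re, ofReal_im] at this ⊢
  linarith [this.2]

lemma re_pos_one_sub_div {s : ℝ} (hs1 : s < 1) (hs0 : 0 ≤ s) {ω : ℂ}
    (hω : ω ∈ sphere (0:ℂ) 1) : 0 < (1 - (s:ℂ) / ω).re := by
  have hne := sphere_ne_zero hω
  simp only [mem_sphere_iff_norm, sub_zero] at hω
  have h1 : |((s:ℂ) / ω).re| ≤ ‖(s:ℂ) / ω‖ := Complex.abs_re_le_norm _
  rw [norm_div, hω, div_one, Complex.norm_real] at h1
  have := (abs_le.1 h1).2
  rw [Real.norm_eq_abs, _root_.abs_of_nonneg hs0] at this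
  simp only [sub_re, one_re]
  linarith

lemma slit1 {s : ℝ} (hs1 : s < 1) (hs0 : 0 ≤ s) {ω : ℂ}
    (hω : ω ∈ sphere (0:ℂ) 1) : (1 - (s:ℂ) * ω) ∈ slitPlane :=
  mem_slitPlane_iff.2 (Or.inl (re_pos_one_sub_mul hs1 hs0 hω))

lemma slit2 {s : ℝ} (hs1 : s < 1) (hs0 : 0 ≤ s) {ω : ℂ}
    (hω : ω ∈ sphere (0:ℂ) 1) : (1 - (s:ℂ) / ω) ∈ slitPlane :=
  mem_slitPlane_iff.2 (Or.inl (re_pos_one_sub_div hs1 hs0 hω))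

noncomputable def HInt (s : ℝ) (α β : ℂ) (m : ℤ) : ℂ :=
  ∮ ω in C(0, 1), (1 - (s:ℂ) * ω) ^ α * (1 - (s:ℂ) / ω) ^ β * ω ^ m

section
variable {s : ℝ}

lemma sphere_ne_zero' {ω : ℂ} (hω : ω ∈ sphere (0:ℂ) 1) : ω ≠ 0 := by
  simp only [mem_sphere_iff_norm, sub_zero] at hω
  intro h; rw [h] at hω; simp at hω

lemma HInt_integrable (hs1 : s < 1) (hs0 : 0 ≤ s) (α β : ℂ) (m : ℤ) :
    CircleIntegrable (fun ω : ℂ => (1 - (s:ℂ) * ω) ^ α * (1 - (s:ℂ) / ω) ^ β * ω ^ m) 0 1 := by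
  apply ContinuousOn.circleIntegrable zero_le_one
  intro ω hω
  have hω0 : ω ≠ 0 := sphere_ne_zero' hω
  apply ContinuousWithinAt.mul
  apply ContinuousWithinAt.mul
  · exact (ContinuousAt.cpow ((continuous_const.sub (continuous_const.mul continuous_id)).continuousAt)
      continuousAt_const (slit1 hs1 hs0 hω)).continuousWithinAt
  · exact (ContinuousAt.cpow (continuousAt_const.sub (continuousAt_const.div continuousAt_id hω0))
      continuousAt_const (slit2 hs1 hs0 hω)).continuousWithinAt
  · exact (continuousAt_zpow₀ ω m (Or.inl hω0)).continuousWithinAt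
lemma CircleIntegrable.const_mul'' {f : ℂ → ℂ} {c : ℂ} {R : ℝ}
    (hf : CircleIntegrable f c R) (a : ℂ) : CircleIntegrable (fun z => a * f z) c R :=
  IntervalIntegrable.const_mul hf a

lemma HInt_shift_alpha (hs1 : s < 1) (hs0 : 0 ≤ s) (α β : ℂ) (m : ℤ) :
    HInt s (α + 1) β m = HInt s α β m - (s:ℂ) * HInt s α β (m + 1) := by
  have key : HInt s (α + 1) β m = ∮ ω in C(0,1),
      ((1 - (s:ℂ) * ω) ^ α * (1 - (s:ℂ) / ω) ^ β * ω ^ m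
        - (s:ℂ) * ((1 - (s:ℂ) * ω) ^ α * (1 - (s:ℂ) / ω) ^ β * ω ^ (m+1))) := by
    refine circleIntegral.integral_congr zero_le_one fun ω hω => ?_
    have hω0 : ω ≠ 0 := sphere_ne_zero' hω
    have hb : (1 - (s:ℂ) * ω) ≠ 0 := slitPlane_ne_zero (slit1 hs1 hs0 hω)
    have h1 : (1 - (s:ℂ) * ω) ^ (α + 1) = (1 - (s:ℂ) * ω) ^ α * (1 - (s:ℂ) * ω) := by
      rw [cpow_add _ _ hb, cpow_one]
    have h2 : ω ^ (m + 1) = ω ^ m * ω := zpow_add_one₀ hω0 m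
    simp only [h1, h2]
    ring
  rw [key, circleIntegral.integral_sub (HInt_integrable hs1 hs0 α β m)
      ((HInt_integrable hs1 hs0 α β (m+1)).const_mul'' _),
    circleIntegral.integral_const_mul]
  rfl

lemma HInt_shift_beta (hs1 : s < 1) (hs0 : 0 ≤ s) (α β : ℂ) (m : ℤ) :
    HInt s α (β + 1) m = HInt s α β m - (s:ℂ) * HInt s α β (m - 1) := by
  have key : HInt s α (β + 1) m = ∮ ω in C(0,1),
      ((1 - (s:ℂ) * ω) ^ α * (1 - (s:ℂ) / ω) ^ β * ω ^ m
        - (s:ℂ) * ((1 - (s:ℂ) * ω) ^ α * (1 - (s:ℂ) / ω) ^ β * ω ^ (m-1))) := by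
    refine circleIntegral.integral_congr zero_le_one fun ω hω => ?_
    have hω0 : ω ≠ 0 := sphere_ne_zero' hω
    have hb : (1 - (s:ℂ) / ω) ≠ 0 := slitPlane_ne_zero (slit2 hs1 hs0 hω)
    have h1 : (1 - (s:ℂ) / ω) ^ (β + 1) = (1 - (s:ℂ) / ω) ^ β * (1 - (s:ℂ) / ω) := by
      rw [cpow_add _ _ hb, cpow_one]
    have h2 : ω ^ (m - 1) = ω ^ m * ω⁻¹ := zpow_sub_one₀ hω0 m
    simp only [h1, h2]
    field_simp
  rw [key, circleIntegral.integral_sub (HInt_integrable hs1 hs0 α β m)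
      ((HInt_integrable hs1 hs0 α β (m-1)).const_mul'' _),
    circleIntegral.integral_const_mul]
  rfl

lemma CircleIntegrable.add'' {f g : ℂ → ℂ} {c : ℂ} {R : ℝ} (hf : CircleIntegrable f c R)
    (hg : CircleIntegrable g c R) : CircleIntegrable (fun z => f z + g z) c R :=
  IntervalIntegrable.add hf hg

lemma circleIntegral_neg' {g : ℂ → ℂ} {c : ℂ} {R : ℝ} :
    (∮ z in C(c,R), -g z) = -∮ z in C(c,R), g z := by
  have := circleIntegral.integral_const_mul (-1) g c R
  simpa using this

lemma circleIntegral_add' {f g : ℂ → ℂ} {c : ℂ} {R : ℝ} (hf : CircleIntegrable f c R)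
    (hg : CircleIntegrable g c R) :
    (∮ z in C(c,R), (f z + g z)) = (∮ z in C(c,R), f z) + ∮ z in C(c,R), g z := by
  have h := circleIntegral.integral_sub hf hg.neg
  simp only [Pi.neg_apply, sub_neg_eq_add] at h
  rw [h, circleIntegral_neg']
  ring

lemma HInt_deriv_rel (hs1 : s < 1) (hs0 : 0 ≤ s) (α β : ℂ) (m : ℤ) :
    (-(s:ℂ)*α) * HInt s (α-1) β m + ((s:ℂ)*β) * HInt s α (β-1) (m-2)
      + (m:ℂ) * HInt s α β (m-1) = 0 := by
  have hint1 := (HInt_integrable hs1 hs0 (α-1) β m).const_mul'' (-(s:ℂ)*α)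
  have hint2 := (HInt_integrable hs1 hs0 α (β-1) (m-2)).const_mul'' ((s:ℂ)*β)
  have hint3 := (HInt_integrable hs1 hs0 α β (m-1)).const_mul'' (m:ℂ)
  have key : (∮ ω in C(0,1),
      ((-(s:ℂ)*α) * ((1 - (s:ℂ) * ω) ^ (α-1) * (1 - (s:ℂ) / ω) ^ β * ω ^ m)
       + ((s:ℂ)*β) * ((1 - (s:ℂ) * ω) ^ α * (1 - (s:ℂ) / ω) ^ (β-1) * ω ^ (m-2))
       + (m:ℂ) * ((1 - (s:ℂ) * ω) ^ α * (1 - (s:ℂ) / ω) ^ β * ω ^ (m-1)))) = 0 := by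
    refine circleIntegral.integral_eq_zero_of_hasDerivWithinAt zero_le_one
      (f := fun ω => (1 - (s:ℂ) * ω) ^ α * (1 - (s:ℂ) / ω) ^ β * ω ^ m) fun ω hω => ?_
    have hω0 : ω ≠ 0 := sphere_ne_zero' hω
    have hu : HasDerivAt (fun ω : ℂ => (1 - (s:ℂ) * ω) ^ α)
        (α * (1 - (s:ℂ) * ω) ^ (α-1) * (-(s:ℂ))) ω := by
      have hbase : HasDerivAt (fun ω : ℂ => 1 - (s:ℂ) * ω) (-(s:ℂ)) ω := by
        simpa using ((hasDerivAt_id ω).const_mul (s:ℂ)).const_sub 1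
      exact hbase.cpow_const (slit1 hs1 hs0 hω)
    have hv : HasDerivAt (fun ω : ℂ => (1 - (s:ℂ) / ω) ^ β)
        (β * (1 - (s:ℂ) / ω) ^ (β-1) * ((s:ℂ) * (ω^2)⁻¹)) ω := by
      have hbase : HasDerivAt (fun ω : ℂ => 1 - (s:ℂ) / ω) ((s:ℂ) * (ω^2)⁻¹) ω := by
        have := ((hasDerivAt_inv hω0).const_mul (s:ℂ)).const_sub 1
        simpa [div_eq_mul_inv, mul_comm, neg_mul, mul_neg] using this
      exact hbase.cpow_const (slit2 hs1 hs0 hω)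
    have hw : HasDerivAt (fun ω : ℂ => ω ^ m) ((m:ℂ) * ω ^ (m-1)) ω :=
      hasDerivAt_zpow m ω (Or.inl hω0)
    have hprod := (hu.mul hv).mul hw
    refine HasDerivAt.hasDerivWithinAt (HasDerivAt.congr_deriv hprod ?_)
    have hz1 : ω ^ m * (ω^2)⁻¹ = ω ^ (m-2) := by
      have h2' : ((ω:ℂ)^(2:ℤ))⁻¹ = (ω^2)⁻¹ := by norm_cast
      rw [show m - 2 = m + (-2) by ring, zpow_add₀ hω0, zpow_neg, h2']
    calc (α * (1 - (s:ℂ)*ω) ^ (α-1) * (-(s:ℂ)) * (1 - (s:ℂ)/ω) ^ β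
            + (1 - (s:ℂ)*ω) ^ α * (β * (1 - (s:ℂ)/ω) ^ (β-1) * ((s:ℂ) * (ω^2)⁻¹))) * ω ^ m
          + (1 - (s:ℂ)*ω) ^ α * (1 - (s:ℂ)/ω) ^ β * ((m:ℂ) * ω ^ (m-1))
        = (-(s:ℂ)*α) * ((1 - (s:ℂ)*ω) ^ (α-1) * (1 - (s:ℂ)/ω) ^ β * ω ^ m)
          + ((s:ℂ)*β) * ((1 - (s:ℂ)*ω) ^ α * (1 - (s:ℂ)/ω) ^ (β-1) * (ω ^ m * (ω^2)⁻¹))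
          + (m:ℂ) * ((1 - (s:ℂ)*ω) ^ α * (1 - (s:ℂ)/ω) ^ β * ω ^ (m-1)) := by ring
      _ = _ := by rw [hz1]
  rw [circleIntegral_add' (hint1.add'' hint2) hint3,
      circleIntegral_add' hint1 hint2,
      circleIntegral.integral_const_mul, circleIntegral.integral_const_mul,
      circleIntegral.integral_const_mul] at key
  simpa [HInt] using key

lemma HInt_three_term (hs1 : s < 1) (hs0 : 0 ≤ s) (α β : ℂ) (m : ℤ) :
    (1 - (s:ℂ)^2) * (-(m:ℂ) - 1) * HInt s α β m
      = (-(s:ℂ) * α) * HInt s (α-1) (β+1) (m+1)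
        + ((s:ℂ) * β) * HInt s (α+1) (β-1) (m-1)
        + (s:ℂ)^2 * (β - α) * HInt s α β m := by
  have E1 := HInt_shift_beta hs1 hs0 (α-1) β (m+1)
  have E2 : HInt s (α+1) (β-1) (m-1)
      = HInt s α (β-1) (m-1) - (s:ℂ) * HInt s α (β-1) m := by
    simpa using HInt_shift_alpha hs1 hs0 α (β-1) (m-1)
  have E3 : (-(s:ℂ)*α) * HInt s (α-1) β (m+1) + ((s:ℂ)*β) * HInt s α (β-1) (m-1)
      + ((m:ℂ)+1) * HInt s α β m = 0 := by
    have := HInt_deriv_rel hs1 hs0 α β (m+1)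
    simpa [show m+1-2 = m-1 by ring, show m+1-1 = m by ring, Int.cast_add] using this
  have E4 : HInt s α β m = HInt s (α-1) β m - (s:ℂ) * HInt s (α-1) β (m+1) := by
    simpa using HInt_shift_alpha hs1 hs0 (α-1) β m
  have E5 : HInt s α β m = HInt s α (β-1) m - (s:ℂ) * HInt s α (β-1) (m-1) := by
    simpa using HInt_shift_beta hs1 hs0 α (β-1) m
  have E1' : HInt s (α-1) (β+1) (m+1)
      = HInt s (α-1) β (m+1) - (s:ℂ) * HInt s (α-1) β m := by
    simpa [show m+1-1 = m by ring] using E1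
  linear_combination ((s:ℂ)*α) * E1' - ((s:ℂ)*β) * E2 + (-1 + (s:ℂ)^2) * E3
    + ((s:ℂ)^2*α) * E4 - ((s:ℂ)^2*β) * E5

end
lemma real_gamma_prod_pos_aux : ∀ (n : ℕ) (t : ℤ), -(n:ℤ) ≤ t → ∀ y₁ y₂ : ℝ,
    (t:ℝ) < y₁ → y₁ < t+1 → (t:ℝ) < y₂ → y₂ < t+1 → 0 < Real.Gamma y₁ * Real.Gamma y₂ := by
  intro n
  induction n with
  | zero =>
    intro t ht y₁ y₂ h1 h2 h3 h4
    have ht0 : (0:ℝ) ≤ t := by exact_mod_cast ht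
    exact mul_pos (Real.Gamma_pos_of_pos (lt_of_le_of_lt ht0 h1))
      (Real.Gamma_pos_of_pos (lt_of_le_of_lt ht0 h3))
  | succ n ih =>
    intro t ht y₁ y₂ h1 h2 h3 h4
    rcases le_or_gt 0 t with h | h
    · have ht0 : (0:ℝ) ≤ t := by exact_mod_cast h
      exact mul_pos (Real.Gamma_pos_of_pos (lt_of_le_of_lt ht0 h1))
        (Real.Gamma_pos_of_pos (lt_of_le_of_lt ht0 h3))
    · have htR : (t:ℝ) + 1 ≤ 0 := by
        have : t + 1 ≤ 0 := h
        exact_mod_cast this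
      have hy1 : y₁ < 0 := lt_of_lt_of_le h2 htR
      have hy2 : y₂ < 0 := lt_of_lt_of_le h4 htR
      have hg1 : Real.Gamma y₁ = Real.Gamma (y₁ + 1) / y₁ := by
        rw [Real.Gamma_add_one hy1.ne]; exact (mul_div_cancel_left₀ _ hy1.ne).symm
      have hg2 : Real.Gamma y₂ = Real.Gamma (y₂ + 1) / y₂ := by
        rw [Real.Gamma_add_one hy2.ne]; exact (mul_div_cancel_left₀ _ hy2.ne).symm
      have hrec := ih (t+1) (by omega) (y₁+1) (y₂+1)
        (by push_cast; linarith) (by push_cast; linarith)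
        (by push_cast; linarith) (by push_cast; linarith)
      rw [hg1, hg2]
      rw [div_mul_div_comm]
      exact div_pos hrec (mul_pos_of_neg_of_neg hy1 hy2)

lemma real_gamma_prod_pos (t : ℤ) {y₁ y₂ : ℝ}
    (h1 : (t:ℝ) < y₁) (h2 : y₁ < t+1) (h3 : (t:ℝ) < y₂) (h4 : y₂ < t+1) :
    0 < Real.Gamma y₁ * Real.Gamma y₂ :=
  real_gamma_prod_pos_aux (-t).toNat t (by omega) y₁ y₂ h1 h2 h3 h4

lemma same_interval_mul_pos (t : ℤ) {y₁ y₂ : ℝ}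
    (h1 : (t:ℝ) < y₁) (h2 : y₁ < t+1) (h3 : (t:ℝ) < y₂) (h4 : y₂ < t+1) :
    0 < y₁ * y₂ := by
  rcases le_or_gt 0 t with h | h
  · have ht0 : (0:ℝ) ≤ t := by exact_mod_cast h
    exact mul_pos (lt_of_le_of_lt ht0 h1) (lt_of_le_of_lt ht0 h3)
  · have htR : (t:ℝ) + 1 ≤ 0 := by
      have : t + 1 ≤ 0 := h
      exact_mod_cast this
    exact mul_pos_of_neg_of_neg (lt_of_lt_of_le h2 htR) (lt_of_lt_of_le h4 htR)
section Series
variable {z z' : ℂ}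

lemma complementary_re (hc : ComplementarySeries z z') :
    z = ((z.re : ℝ) : ℂ) ∧ z' = ((z'.re : ℝ) : ℂ) := by
  obtain ⟨h1, h2, _⟩ := hc
  constructor <;> [apply Complex.ext; apply Complex.ext] <;> simp [h1, h2]

lemma series_gamma_ne_zero (h : PrincipalSeries z z' ∨ ComplementarySeries z z') (n : ℤ) :
    ∀ mm : ℕ, z + (n : ℂ) ≠ -mm := by
  intro mm heq
  rcases h with ⟨him, _⟩ | ⟨him, _, m, hm1, hm2, _⟩
  · have := congrArg Complex.im heq
    simp [him] at this
  · have hre := congrArg Complex.re heq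
    simp at hre
    have hlt1 : ((m + n : ℤ) : ℝ) < ((-(mm:ℤ) : ℤ) : ℝ) := by push_cast; linarith
    have hlt2 : ((-(mm:ℤ) : ℤ) : ℝ) < ((m + n + 1 : ℤ) : ℝ) := by push_cast; linarith
    have l1 : (m + n : ℤ) < -(mm:ℤ) := by exact_mod_cast hlt1
    have l2 : (-(mm:ℤ)) < m + n + 1 := by exact_mod_cast hlt2
    omega

lemma series_symm (h : PrincipalSeries z z' ∨ ComplementarySeries z z') :
    PrincipalSeries z' z ∨ ComplementarySeries z' z := by
  rcases h with ⟨him, hconj⟩ | ⟨h1, h2, m, hm1, hm2, hm3, hm4⟩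
  · left
    refine ⟨?_, ?_⟩
    · rw [hconj]; simpa using him
    · rw [hconj]; simp
  · right
    exact ⟨h2, h1, m, hm3, hm4, hm1, hm2⟩

lemma series_add_ne_zero (h : PrincipalSeries z z' ∨ ComplementarySeries z z') (n : ℤ) :
    z + (n : ℂ) ≠ 0 := by
  have := series_gamma_ne_zero h n 0
  simpa using this

lemma series_gamma_prod (h : PrincipalSeries z z' ∨ ComplementarySeries z z') (n : ℤ) :
    ∃ p : ℝ, 0 < p ∧
      Complex.Gamma (z + (n:ℂ)) * Complex.Gamma (z' + (n:ℂ)) = (p : ℂ) := by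
  rcases h with hP | hC
  · obtain ⟨him, hconj⟩ := hP
    have hzn : z' + (n:ℂ) = (starRingEnd ℂ) (z + (n:ℂ)) := by
      rw [hconj, map_add]
      congr 1
      simp
    refine ⟨Complex.normSq (Complex.Gamma (z + (n:ℂ))), ?_, ?_⟩
    · refine Complex.normSq_pos.2 (Complex.Gamma_ne_zero ?_)
      exact series_gamma_ne_zero (Or.inl ⟨him, hconj⟩) n
    · rw [hzn, Complex.Gamma_conj, Complex.mul_conj]
  · obtain ⟨hz, hz'⟩ := complementary_re hC
    obtain ⟨h1, h2, m, hm1, hm2, hm3, hm4⟩ := hC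
    refine ⟨Real.Gamma (z.re + n) * Real.Gamma (z'.re + n), ?_, ?_⟩
    · refine real_gamma_prod_pos (m + n) ?_ ?_ ?_ ?_ <;> push_cast <;> linarith
    · have hzn : z + (n:ℂ) = ((z.re + n : ℝ) : ℂ) := by
        rw [Complex.ext_iff]; constructor <;> simp [h1]
      have hzn' : z' + (n:ℂ) = ((z'.re + n : ℝ) : ℂ) := by
        rw [Complex.ext_iff]; constructor <;> simp [h2]
      rw [hzn, hzn', Complex.Gamma_ofReal, Complex.Gamma_ofReal, Complex.ofReal_mul]

lemma series_lin_prod (h : PrincipalSeries z z' ∨ ComplementarySeries z z') (n : ℤ) :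
    ∃ p : ℝ, 0 < p ∧ (z + (n:ℂ)) * (z' + (n:ℂ)) = (p : ℂ) := by
  rcases h with hP | hC
  · obtain ⟨him, hconj⟩ := hP
    have hzn : z' + (n:ℂ) = (starRingEnd ℂ) (z + (n:ℂ)) := by
      rw [hconj, map_add]; congr 1; simp
    refine ⟨Complex.normSq (z + (n:ℂ)), ?_, ?_⟩
    · exact Complex.normSq_pos.2 (series_add_ne_zero (Or.inl ⟨him, hconj⟩) n)
    · rw [hzn, Complex.mul_conj]
  · obtain ⟨hz, hz'⟩ := complementary_re hC
    obtain ⟨h1, h2, m, hm1, hm2, hm3, hm4⟩ := hC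
    refine ⟨(z.re + n) * (z'.re + n), ?_, ?_⟩
    · refine same_interval_mul_pos (m + n) ?_ ?_ ?_ ?_ <;> push_cast <;> linarith
    · have hzn : z + (n:ℂ) = ((z.re + n : ℝ) : ℂ) := by
        rw [Complex.ext_iff]; constructor <;> simp [h1]
      have hzn' : z' + (n:ℂ) = ((z'.re + n : ℝ) : ℂ) := by
        rw [Complex.ext_iff]; constructor <;> simp [h2]
      rw [hzn, hzn', Complex.ofReal_mul]
end Series

lemma psiF_eq_HInt (z z' : ℂ) (ξ : ℝ) (a x : ℝ) (m : ℤ)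
    (hm : -((x:ℝ) : ℂ) - ((a:ℝ) : ℂ) - 1 = ((m : ℤ) : ℂ)) :
    psiF z z' ξ a x =
      posSqrtRe (Complex.Gamma ((x : ℂ) + z + 1/2) * Complex.Gamma ((x : ℂ) + z' + 1/2) /
          (Complex.Gamma (z - (a : ℂ) + 1/2) * Complex.Gamma (z' - (a : ℂ) + 1/2))) *
        (Complex.Gamma (z' - (a : ℂ) + 1/2) / Complex.Gamma (z' + (x : ℂ) + 1/2)) *
        (1 - (ξ : ℂ)) ^ ((z' - z + 1) / 2) *
        ((2 * (Real.pi : ℂ) * Complex.I)⁻¹ *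
          HInt (Real.sqrt ξ) (-z' + (a : ℂ) - 1/2) (z - (a : ℂ) - 1/2) m) := by
  unfold psiF HInt
  simp only [hm, Complex.cpow_intCast]


end Helpers

/-- Three-term relation in the index `a = k + 1/2`: for `(z, z')` in the
principal or complementary series, `0 < ξ < 1`, and every `x = j + 1/2 ∈ ℤ'`:
`(1-ξ) x ψ_a(x) = √(ξ(z-a+1/2)(z'-a+1/2)) ψ_{a-1}(x)
  + √(ξ(z-a-1/2)(z'-a-1/2)) ψ_{a+1}(x) + (-a + ξ(z+z'-a)) ψ_a(x)`. -/
theorem psi_three_term (z z' : ℂ) (ξ : ℝ) (hξ0 : 0 < ξ) (hξ1 : ξ < 1)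
    (h : PrincipalSeries z z' ∨ ComplementarySeries z z') (k j : ℤ) :
    (1 - (ξ : ℂ)) * ((j : ℂ) + 1/2) * psiF z z' ξ ((k : ℝ) + 1/2) ((j : ℝ) + 1/2)
      = posSqrtRe ((ξ : ℂ) * (z - ((k : ℂ) + 1/2) + 1/2) * (z' - ((k : ℂ) + 1/2) + 1/2)) *
          psiF z z' ξ (((k : ℝ) + 1/2) - 1) ((j : ℝ) + 1/2)
        + posSqrtRe ((ξ : ℂ) * (z - ((k : ℂ) + 1/2) - 1/2) * (z' - ((k : ℂ) + 1/2) - 1/2)) *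
          psiF z z' ξ (((k : ℝ) + 1/2) + 1) ((j : ℝ) + 1/2)
        + (-((k : ℂ) + 1/2) + (ξ : ℂ) * (z + z' - ((k : ℂ) + 1/2))) *
          psiF z z' ξ ((k : ℝ) + 1/2) ((j : ℝ) + 1/2) := by
  have hξ0' : (0:ℝ) ≤ ξ := hξ0.le
  have hs0 : (0:ℝ) ≤ Real.sqrt ξ := Real.sqrt_nonneg ξ
  have hs1 : Real.sqrt ξ < 1 := by
    rw [show (1:ℝ) = Real.sqrt 1 by simp]
    exact Real.sqrt_lt_sqrt hξ0' hξ1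
  have hsq : Real.sqrt ξ * Real.sqrt ξ = ξ := Real.mul_self_sqrt hξ0'
  have hss' : (Real.sqrt ξ : ℂ) * (Real.sqrt ξ : ℂ) = (ξ : ℂ) := by exact_mod_cast hsq
  have hzne : ∀ n : ℤ, z + (n:ℂ) ≠ 0 := fun n => series_add_ne_zero h n
  have hz'ne : ∀ n : ℤ, z' + (n:ℂ) ≠ 0 := fun n => series_add_ne_zero (series_symm h) n
  obtain ⟨ν, hν, hN⟩ := series_gamma_prod h (j+1)
  obtain ⟨δ0, hδ0, hD0⟩ := series_gamma_prod h (-k)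
  obtain ⟨δm, hδm, hDm⟩ := series_gamma_prod h (-k+1)
  obtain ⟨δp, hδp, hDp⟩ := series_gamma_prod h (-k-1)
  obtain ⟨p₁, hp₁, hP1⟩ := series_lin_prod h (-k)
  obtain ⟨p₂, hp₂, hP2⟩ := series_lin_prod h (-k-1)
  have e1 : z + ((-k+1 : ℤ):ℂ) = (z + ((-k:ℤ):ℂ)) + 1 := by push_cast; ring
  have e2 : z' + ((-k+1 : ℤ):ℂ) = (z' + ((-k:ℤ):ℂ)) + 1 := by push_cast; ring
  have e3 : z + ((-k : ℤ):ℂ) = (z + ((-k-1:ℤ):ℂ)) + 1 := by push_cast; ring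
  have e4 : z' + ((-k : ℤ):ℂ) = (z' + ((-k-1:ℤ):ℂ)) + 1 := by push_cast; ring
  have hlink1 : δm = p₁ * δ0 := by
    have : (δm : ℂ) = ((p₁ * δ0 : ℝ) : ℂ) := by
      rw [← hDm, e1, e2, Complex.Gamma_add_one _ (hzne (-k)),
        Complex.Gamma_add_one _ (hz'ne (-k)), Complex.ofReal_mul, ← hD0, ← hP1]
      ring
    exact_mod_cast this
  have hlink2 : δ0 = p₂ * δp := by
    have : (δ0 : ℂ) = ((p₂ * δp : ℝ) : ℂ) := by
      rw [← hD0, e3, e4, Complex.Gamma_add_one _ (hzne (-k-1)),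
        Complex.Gamma_add_one _ (hz'ne (-k-1)), Complex.ofReal_mul, ← hDp, ← hP2]
      ring
    exact_mod_cast this
  have hsq1 : Real.sqrt (ξ * p₁) * Real.sqrt (ν / δm) = Real.sqrt ξ * Real.sqrt (ν / δ0) := by
    rw [hlink1, Real.sqrt_mul hξ0',
      show ν / (p₁ * δ0) = (ν / δ0) / p₁ by rw [div_div, mul_comm],
      Real.sqrt_div (by positivity) p₁]
    have hsp : Real.sqrt p₁ ≠ 0 := by positivity
    field_simp
  have hsq2 : Real.sqrt (ξ * p₂) * Real.sqrt (ν / δp)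
      = Real.sqrt ξ * p₂ * Real.sqrt (ν / δ0) := by
    have hstep : ν / δp = p₂ * (ν / δ0) := by
      rw [hlink2]
      field_simp
    rw [hstep, Real.sqrt_mul hξ0', Real.sqrt_mul hp₂.le]
    linear_combination (Real.sqrt ξ * Real.sqrt (ν / δ0)) * (Real.mul_self_sqrt hp₂.le)
  have hsq1' : ((Real.sqrt (ξ * p₁) : ℝ):ℂ) * ((Real.sqrt (ν / δm) : ℝ):ℂ)
      = ((Real.sqrt ξ : ℝ):ℂ) * ((Real.sqrt (ν / δ0) : ℝ):ℂ) := by exact_mod_cast hsq1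
  have hsq2' : ((Real.sqrt (ξ * p₂) : ℝ):ℂ) * ((Real.sqrt (ν / δp) : ℝ):ℂ)
      = ((Real.sqrt ξ : ℝ):ℂ) * (p₂:ℂ) * ((Real.sqrt (ν / δ0) : ℝ):ℂ) := by
    exact_mod_cast hsq2
  have gN1 : z + ((j+1 : ℤ):ℂ) = (((j:ℝ)+1/2 : ℝ):ℂ) + z + 1/2 := by push_cast; ring
  have gN2 : z' + ((j+1 : ℤ):ℂ) = (((j:ℝ)+1/2 : ℝ):ℂ) + z' + 1/2 := by push_cast; ring
  have g01 : z + ((-k : ℤ):ℂ) = z - (((k:ℝ)+1/2 : ℝ):ℂ) + 1/2 := by push_cast; ring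
  have g02 : z' + ((-k : ℤ):ℂ) = z' - (((k:ℝ)+1/2 : ℝ):ℂ) + 1/2 := by push_cast; ring
  have gm1 : z + ((-k+1 : ℤ):ℂ) = z - ((((k:ℝ)+1/2) - 1 : ℝ):ℂ) + 1/2 := by push_cast; ring
  have gm2 : z' + ((-k+1 : ℤ):ℂ) = z' - ((((k:ℝ)+1/2) - 1 : ℝ):ℂ) + 1/2 := by push_cast; ring
  have gp1 : z + ((-k-1 : ℤ):ℂ) = z - ((((k:ℝ)+1/2) + 1 : ℝ):ℂ) + 1/2 := by push_cast; ring
  have gp2 : z' + ((-k-1 : ℤ):ℂ) = z' - ((((k:ℝ)+1/2) + 1 : ℝ):ℂ) + 1/2 := by push_cast; ring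
  rw [gN1, gN2] at hN
  rw [g01, g02] at hD0
  rw [gm1, gm2] at hDm
  rw [gp1, gp2] at hDp
  have hg1 : Complex.Gamma (z' - ((((k:ℝ)+1/2) - 1 : ℝ):ℂ) + 1/2)
      = (z' - (k:ℂ)) * Complex.Gamma (z' - (((k:ℝ)+1/2 : ℝ):ℂ) + 1/2) := by
    rw [← gm2, ← g02, e2, Complex.Gamma_add_one _ (hz'ne (-k))]
    congr 1
    push_cast
    ring
  have hg2 : Complex.Gamma (z' - (((k:ℝ)+1/2 : ℝ):ℂ) + 1/2)
      = (z' - (k:ℂ) - 1) * Complex.Gamma (z' - ((((k:ℝ)+1/2) + 1 : ℝ):ℂ) + 1/2) := by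
    rw [← g02, ← gp2, e4, Complex.Gamma_add_one _ (hz'ne (-k-1))]
    congr 1
    push_cast
    ring
  have hψ0 := psiF_eq_HInt z z' ξ ((k:ℝ)+1/2) ((j:ℝ)+1/2) (-(j+k)-2) (by push_cast; ring)
  have hψm := psiF_eq_HInt z z' ξ (((k:ℝ)+1/2)-1) ((j:ℝ)+1/2) (-(j+k)-2+1) (by push_cast; ring)
  have hψp := psiF_eq_HInt z z' ξ (((k:ℝ)+1/2)+1) ((j:ℝ)+1/2) (-(j+k)-2-1) (by push_cast; ring)
  rw [show -z' + ((((k:ℝ)+1/2) - 1 : ℝ):ℂ) - 1/2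
        = (-z' + (((k:ℝ)+1/2 : ℝ):ℂ) - 1/2) - 1 by push_cast; ring,
      show z - ((((k:ℝ)+1/2) - 1 : ℝ):ℂ) - 1/2
        = (z - (((k:ℝ)+1/2 : ℝ):ℂ) - 1/2) + 1 by push_cast; ring] at hψm
  rw [show -z' + ((((k:ℝ)+1/2) + 1 : ℝ):ℂ) - 1/2
        = (-z' + (((k:ℝ)+1/2 : ℝ):ℂ) - 1/2) + 1 by push_cast; ring,
      show z - ((((k:ℝ)+1/2) + 1 : ℝ):ℂ) - 1/2
        = (z - (((k:ℝ)+1/2 : ℝ):ℂ) - 1/2) - 1 by push_cast; ring] at hψp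
  rw [hN, hD0] at hψ0
  rw [hN, hDm] at hψm
  rw [hN, hDp] at hψp
  rw [show ((ν:ℝ):ℂ) / ((δ0:ℝ):ℂ) = ((ν/δ0 : ℝ):ℂ) by norm_cast] at hψ0
  rw [show ((ν:ℝ):ℂ) / ((δm:ℝ):ℂ) = ((ν/δm : ℝ):ℂ) by norm_cast] at hψm
  rw [show ((ν:ℝ):ℂ) / ((δp:ℝ):ℂ) = ((ν/δp : ℝ):ℂ) by norm_cast] at hψp
  simp only [posSqrtRe, Complex.ofReal_re] at hψ0 hψm hψp
  have hP2c := hP2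
  have hP1c := hP1
  push_cast at hP1c hP2c
  have hc1 : (ξ:ℂ) * (z - ((k:ℂ) + 1/2) + 1/2) * (z' - ((k:ℂ) + 1/2) + 1/2)
      = ((ξ * p₁ : ℝ):ℂ) := by
    push_cast
    linear_combination (ξ:ℂ) * hP1c
  have hc2 : (ξ:ℂ) * (z - ((k:ℂ) + 1/2) - 1/2) * (z' - ((k:ℂ) + 1/2) - 1/2)
      = ((ξ * p₂ : ℝ):ℂ) := by
    push_cast
    linear_combination (ξ:ℂ) * hP2c
  rw [hc1, hc2]
  simp only [posSqrtRe, Complex.ofReal_re]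
  have HI := HInt_three_term hs1 hs0 (-z' + (((k:ℝ)+1/2 : ℝ):ℂ) - 1/2)
    (z - (((k:ℝ)+1/2 : ℝ):ℂ) - 1/2) (-(j+k)-2)
  have hac : ((((k:ℝ)+1/2 : ℝ)):ℂ) = (k:ℂ) + 1/2 := by push_cast; ring
  have hmc : (((-(j+k)-2 : ℤ)):ℂ) = -(j:ℂ) - (k:ℂ) - 2 := by push_cast; ring
  rw [hac, hmc] at HI
  rw [show ((Real.sqrt ξ : ℝ):ℂ)^2 = ((ξ:ℝ):ℂ) by rw [sq]; exact hss'] at HI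
  rw [hac] at hψ0 hψm hψp hg1 hg2
  rw [hψ0, hψm, hψp, hg1, hg2]
  linear_combination
    (((Real.sqrt (ν/δ0) : ℝ):ℂ) * ((z' - (k:ℂ) - 1)
        * Complex.Gamma (z' - ((((k:ℝ)+1/2) + 1 : ℝ):ℂ) + 1/2)
        / Complex.Gamma (z' + (((j:ℝ)+1/2 : ℝ):ℂ) + 1/2))
      * ((1 - (ξ:ℂ)) ^ ((z' - z + 1)/2)) * (2*(Real.pi:ℂ)*Complex.I)⁻¹) * HI
    - ((z' - (k:ℂ)) * (z' - (k:ℂ) - 1)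
        * Complex.Gamma (z' - ((((k:ℝ)+1/2) + 1 : ℝ):ℂ) + 1/2)
        / Complex.Gamma (z' + (((j:ℝ)+1/2 : ℝ):ℂ) + 1/2)
      * ((1 - (ξ:ℂ)) ^ ((z' - z + 1)/2)) * ((2*(Real.pi:ℂ)*Complex.I)⁻¹
        * HInt (Real.sqrt ξ) (-z' + ((k:ℂ)+1/2) - 1/2 - 1) (z - ((k:ℂ)+1/2) - 1/2 + 1)
          (-(j+k)-2+1))) * hsq1'
    - (Complex.Gamma (z' - ((((k:ℝ)+1/2) + 1 : ℝ):ℂ) + 1/2)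
        / Complex.Gamma (z' + (((j:ℝ)+1/2 : ℝ):ℂ) + 1/2)
      * ((1 - (ξ:ℂ)) ^ ((z' - z + 1)/2)) * ((2*(Real.pi:ℂ)*Complex.I)⁻¹
        * HInt (Real.sqrt ξ) (-z' + ((k:ℂ)+1/2) - 1/2 + 1) (z - ((k:ℂ)+1/2) - 1/2 - 1)
          (-(j+k)-2-1))) * hsq2'
    + (((Real.sqrt ξ : ℝ):ℂ) * ((Real.sqrt (ν/δ0) : ℝ):ℂ)
        * Complex.Gamma (z' - ((((k:ℝ)+1/2) + 1 : ℝ):ℂ) + 1/2)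
        / Complex.Gamma (z' + (((j:ℝ)+1/2 : ℝ):ℂ) + 1/2)
      * ((1 - (ξ:ℂ)) ^ ((z' - z + 1)/2)) * ((2*(Real.pi:ℂ)*Complex.I)⁻¹
        * HInt (Real.sqrt ξ) (-z' + ((k:ℂ)+1/2) - 1/2 + 1) (z - ((k:ℂ)+1/2) - 1/2 - 1)
          (-(j+k)-2-1))) * hP2c
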